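/- arXiv:1909.02546 — 3 statements merged into one kernel-verified Lean document; each statement's English description precedes it below -/
import Mathlib

section
/- Let T > 0, let Σ : [0,T] → M_d(ℝ) be continuous with Σ(t) positive semidefinite for every t, and let Q : [0,T] → M_d(ℝ) be continuous with Q(t) symmetric positive definite for every t. Suppose V : [0,T] → M_d(ℝ) takes symmetric values, is differentiable, satisfies the matrix Riccati equation V'(t) = V(t) Σ(t) V(t) − Q(t) on [0,T], and V(T) is positive definite. Then V(t) is positive definite for every t ∈ [0,T], and moreover V(t) ≤ V(T) + ∫_t^T Q(s) ds in the Loewner (positive semidefinite) order for every t ∈ [0,T]. -/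
open Matrix intervalIntegral

private lemma quad_eq {d : ℕ} (M : Matrix (Fin d) (Fin d) ℝ) (x : Fin d → ℝ) :
    x ⬝ᵥ M *ᵥ x = ∑ i, ∑ j, x i * M i j * x j := by
  simp [dotProduct, mulVec, Finset.mul_sum, mul_assoc]

private lemma herm_of_symm {d : ℕ} {M : Matrix (Fin d) (Fin d) ℝ} (h : M.IsSymm) :
    M.IsHermitian := by
  rwa [Matrix.IsHermitian, Matrix.conjTranspose_eq_transpose_of_trivial]

private lemma intervalIntegrable_sum {ι : Type*} (s : Finset ι) {f : ι → ℝ → ℝ}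
    {μ : MeasureTheory.Measure ℝ} {a b : ℝ}
    (h : ∀ i ∈ s, IntervalIntegrable (f i) μ a b) :
    IntervalIntegrable (fun x => ∑ i ∈ s, f i x) μ a b := by
  have h2 := IntervalIntegrable.sum s h
  rwa [show (∑ i ∈ s, f i) = fun x => ∑ i ∈ s, f i x from funext fun x => by simp] at h2

private lemma pd_of_quad {d : ℕ} {M : Matrix (Fin d) (Fin d) ℝ} (h : M.IsHermitian)
    (hpos : ∀ x : Fin d → ℝ, ‖x‖ = 1 → 0 < x ⬝ᵥ M *ᵥ x) : M.PosDef := by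
  refine Matrix.PosDef.of_dotProduct_mulVec_pos h fun x hx => ?_
  have hnx : (0:ℝ) < ‖x‖ := norm_pos_iff.mpr hx
  have h1 : ‖(‖x‖⁻¹ • x)‖ = 1 := by
    rw [norm_smul, norm_inv, norm_norm, inv_mul_cancel₀ hnx.ne']
  have := hpos _ h1
  rw [Matrix.mulVec_smul, smul_dotProduct, dotProduct_smul] at this
  rw [smul_eq_mul, smul_eq_mul] at this
  have hinv : (0:ℝ) < ‖x‖⁻¹ := inv_pos.mpr hnx
  have hq : 0 < x ⬝ᵥ M *ᵥ x := by nlinarith [mul_pos hinv hinv]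
  simpa using hq

set_option maxHeartbeats 1000000 in
/-- If the symmetric-matrix-valued function `V` solves the matrix Riccati equation
`V' = V Σ V - Q` on `[0, T]` with `Σ` continuous positive semidefinite, `Q` continuous
symmetric positive definite, and `V T` positive definite, then `V t` is positive definite
for all `t ∈ [0, T]` and `V t ≤ V T + ∫_t^T Q s ds` in the Loewner order. -/
theorem stmt_0 {d : ℕ} (T : ℝ) (hT : 0 < T)
    (Sig Q V : ℝ → Matrix (Fin d) (Fin d) ℝ)
    (hSigCont : ∀ i j, ContinuousOn (fun t => Sig t i j) (Set.Icc 0 T))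
    (hSigPsd : ∀ t ∈ Set.Icc (0:ℝ) T, (Sig t).PosSemidef)
    (hQCont : ∀ i j, ContinuousOn (fun t => Q t i j) (Set.Icc 0 T))
    (hQPd : ∀ t ∈ Set.Icc (0:ℝ) T, (Q t).PosDef)
    (hVsymm : ∀ t ∈ Set.Icc (0:ℝ) T, (V t).IsSymm)
    (hVode : ∀ t ∈ Set.Icc (0:ℝ) T, ∀ i j,
      HasDerivAt (fun s => V s i j) ((V t * Sig t * V t - Q t) i j) t)
    (hVT : (V T).PosDef) :
    ∀ t ∈ Set.Icc (0:ℝ) T, (V t).PosDef ∧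
      (V T + Matrix.of (fun i j => ∫ s in t..T, Q s i j) - V t).PosSemidef := by
  have hVat : ∀ s ∈ Set.Icc (0:ℝ) T, ∀ i j, ContinuousAt (fun u => V u i j) s :=
    fun s hs i j => (hVode s hs i j).continuousAt
  have hVcont : ∀ i j, ContinuousOn (fun s => V s i j) (Set.Icc 0 T) :=
    fun i j s hs => (hVat s hs i j).continuousWithinAt
  have hFcont : ∀ i j, ContinuousOn (fun s => (V s * Sig s * V s) i j) (Set.Icc 0 T) := by
    intro i j
    have hrw : (fun s => (V s * Sig s * V s) i j)
        = fun s => ∑ k, (∑ l, V s i l * Sig s l k) * V s k j := by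
      funext s; simp [Matrix.mul_apply]
    rw [hrw]
    exact continuousOn_finset_sum _ fun k _ =>
      (continuousOn_finset_sum _ fun l _ => (hVcont i l).mul (hSigCont l k)).mul (hVcont k j)
  -- F s is positive semidefinite on [0,T]
  have hFpsd : ∀ s ∈ Set.Icc (0:ℝ) T, (V s * Sig s * V s).PosSemidef := by
    intro s hs
    have h0 := (hSigPsd s hs).mul_mul_conjTranspose_same (V s)
    rwa [Matrix.conjTranspose_eq_transpose_of_trivial, hVsymm s hs] at h0
  -- Part 1 : positive definiteness everywhere
  have hpd : ∀ t0 ∈ Set.Icc (0:ℝ) T, (V t0).PosDef := by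
    intro t0 ht0
    by_contra hnot
    have hherm := herm_of_symm (hVsymm t0 ht0)
    rw [Matrix.posDef_iff_dotProduct_mulVec] at hnot
    push_neg at hnot
    obtain ⟨x0, hx0ne, hx0⟩ := hnot hherm
    rw [show star x0 = x0 from funext fun i => star_trivial _] at hx0
    have hnx : (0:ℝ) < ‖x0‖ := norm_pos_iff.mpr hx0ne
    set x1 : Fin d → ℝ := ‖x0‖⁻¹ • x0 with hx1def
    have hx1 : ‖x1‖ = 1 := by
      rw [hx1def, norm_smul, norm_inv, norm_norm, inv_mul_cancel₀ hnx.ne']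
    have hq1 : x1 ⬝ᵥ V t0 *ᵥ x1 ≤ 0 := by
      rw [hx1def, Matrix.mulVec_smul, smul_dotProduct, dotProduct_smul, smul_eq_mul, smul_eq_mul]
      have hinv : (0:ℝ) ≤ ‖x0‖⁻¹ := inv_nonneg.mpr hnx.le
      exact mul_nonpos_of_nonneg_of_nonpos hinv (mul_nonpos_of_nonneg_of_nonpos hinv hx0)
    -- the bad set
    set C : Set (ℝ × (Fin d → ℝ)) :=
      {p | p.1 ∈ Set.Icc t0 T ∧ ‖p.2‖ = 1 ∧ p.2 ⬝ᵥ (V p.1) *ᵥ p.2 ≤ 0} with hCdef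
    have hCsub : C ⊆ Set.Icc t0 T ×ˢ Metric.sphere (0 : Fin d → ℝ) 1 := by
      intro p hp
      exact ⟨hp.1, by simpa [mem_sphere_zero_iff_norm] using hp.2.1⟩
    have hK : IsCompact (Set.Icc t0 T ×ˢ Metric.sphere (0 : Fin d → ℝ) 1) :=
      isCompact_Icc.prod (isCompact_sphere 0 1)
    have hsubIcc0 : Set.Icc t0 T ⊆ Set.Icc 0 T := Set.Icc_subset_Icc ht0.1 le_rfl
    -- joint continuity at points over [0,T]
    have hqc : ∀ p : ℝ × (Fin d → ℝ), p.1 ∈ Set.Icc (0:ℝ) T →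
        ContinuousAt (fun p : ℝ × (Fin d → ℝ) => p.2 ⬝ᵥ (V p.1) *ᵥ p.2) p := by
      intro p hp
      have hrw : (fun p : ℝ × (Fin d → ℝ) => p.2 ⬝ᵥ (V p.1) *ᵥ p.2)
          = fun p => ∑ i, ∑ j, p.2 i * V p.1 i j * p.2 j := by
        funext p; exact quad_eq _ _
      rw [hrw]
      apply tendsto_finset_sum
      intro i _
      apply tendsto_finset_sum
      intro j _
      have h2i : ContinuousAt (fun p : ℝ × (Fin d → ℝ) => p.2 i) p :=
        ((continuous_apply i).comp continuous_snd).continuousAt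
      have h2j : ContinuousAt (fun p : ℝ × (Fin d → ℝ) => p.2 j) p :=
        ((continuous_apply j).comp continuous_snd).continuousAt
      have hV1 : ContinuousAt (fun p : ℝ × (Fin d → ℝ) => V p.1 i j) p :=
        (hVat p.1 hp i j).comp continuous_fst.continuousAt
      exact (h2i.mul hV1).mul h2j
    have hCclosed : IsClosed C := by
      apply isClosed_of_closure_subset
      intro p hp
      have hpK : p ∈ Set.Icc t0 T ×ˢ Metric.sphere (0 : Fin d → ℝ) 1 :=
        (hK.isClosed.closure_subset_iff.mpr hCsub) hp
      have hp1 : p.1 ∈ Set.Icc t0 T := hpK.1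
      have hp2 : ‖p.2‖ = 1 := by simpa [mem_sphere_zero_iff_norm] using hpK.2
      refine ⟨hp1, hp2, ?_⟩
      have hcw : ContinuousWithinAt (fun p : ℝ × (Fin d → ℝ) => p.2 ⬝ᵥ (V p.1) *ᵥ p.2) C p :=
        (hqc p (hsubIcc0 hp1)).continuousWithinAt
      have hmem := hcw.mem_closure_image hp
      have himg : (fun p : ℝ × (Fin d → ℝ) => p.2 ⬝ᵥ (V p.1) *ᵥ p.2) '' C ⊆ Set.Iic 0 :=
        fun y ⟨q, hqC, hqy⟩ => hqy ▸ hqC.2.2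
      have := (isClosed_Iic.closure_subset_iff.mpr himg) hmem
      exact this
    have hCcompact : IsCompact C := hK.of_isClosed_subset hCclosed hCsub
    have hCne : C.Nonempty := ⟨(t0, x1), ⟨⟨le_rfl, ht0.2⟩, hx1, hq1⟩⟩
    set S : Set ℝ := Prod.fst '' C with hSdef
    have hScompact : IsCompact S := hCcompact.image continuous_fst
    have hSne : S.Nonempty := hCne.image _
    have hsSup : sSup S ∈ S := hScompact.sSup_mem hSne
    obtain ⟨p, hpC, hp1⟩ := hsSup
    have hub : ∀ r ∈ S, r ≤ p.1 := by
      intro r hr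
      rw [hp1]
      exact le_csSup hScompact.bddAbove hr
    have hpIcc : p.1 ∈ Set.Icc t0 T := hpC.1
    have hpIcc0 : p.1 ∈ Set.Icc (0:ℝ) T := hsubIcc0 hpIcc
    have hp2ne : p.2 ≠ 0 := by
      intro h
      have h21 := hpC.2.1
      rw [h] at h21
      simpa using h21
    have hpltT : p.1 < T := by
      rcases lt_or_eq_of_le hpIcc.2 with h | h
      · exact h
      · exfalso
        have := hVT.dotProduct_mulVec_pos hp2ne
        rw [show star p.2 = p.2 from funext fun i => star_trivial _] at this
        have h2 := hpC.2.2
        rw [h] at h2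
        linarith
    -- V s is PosDef for s in (p.1, T]
    have hposUnit : ∀ s, p.1 < s → s ≤ T → ∀ y : Fin d → ℝ, ‖y‖ = 1 →
        0 < y ⬝ᵥ V s *ᵥ y := by
      intro s hs1 hs2 y hy
      by_contra hle
      push_neg at hle
      have hmem : s ∈ S := ⟨(s, y), ⟨⟨le_trans hpIcc.1 hs1.le, hs2⟩, hy, hle⟩, rfl⟩
      exact absurd (hub s hmem) (not_le.mpr hs1)
    have hpdafter : ∀ s, p.1 < s → s ≤ T → (V s).PosDef := by
      intro s h1 h2
      have hsI : s ∈ Set.Icc (0:ℝ) T := ⟨le_trans hpIcc0.1 h1.le, h2⟩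
      exact pd_of_quad (herm_of_symm (hVsymm s hsI)) (hposUnit s h1 h2)
    -- V p.1 is PosSemidef by continuity from the right
    have hpsd : (V p.1).PosSemidef := by
      refine Matrix.PosSemidef.of_dotProduct_mulVec_nonneg (herm_of_symm (hVsymm p.1 hpIcc0)) fun y => ?_
      rw [show star y = y from funext fun i => star_trivial _]
      rcases eq_or_ne y 0 with rfl | hy
      · simp
      · have hct : ContinuousAt (fun s => y ⬝ᵥ V s *ᵥ y) p.1 := by
          have hrw : (fun s => y ⬝ᵥ V s *ᵥ y) = fun s => ∑ i, ∑ j, y i * V s i j * y j := by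
            funext s; exact quad_eq _ _
          rw [hrw]
          apply tendsto_finset_sum
          intro i _
          apply tendsto_finset_sum
          intro j _
          exact (continuousAt_const.mul (hVat p.1 hpIcc0 i j)).mul continuousAt_const
        have htd : Filter.Tendsto (fun s => y ⬝ᵥ V s *ᵥ y) (nhdsWithin p.1 (Set.Ioi p.1))
            (nhds (y ⬝ᵥ V p.1 *ᵥ y)) := hct.continuousWithinAt.tendsto
        refine ge_of_tendsto htd ?_
        filter_upwards [Ioc_mem_nhdsGT hpltT] with s hs
        have := (hpdafter s hs.1 hs.2).dotProduct_mulVec_pos hy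
        rw [show star y = y from funext fun i => star_trivial _] at this
        exact this.le
    have hq0 : p.2 ⬝ᵥ V p.1 *ᵥ p.2 = 0 := by
      have h1 := hpsd.dotProduct_mulVec_nonneg p.2
      rw [show star p.2 = p.2 from funext fun i => star_trivial _] at h1
      exact le_antisymm hpC.2.2 h1
    have hker : V p.1 *ᵥ p.2 = 0 := by
      have := (hpsd.dotProduct_mulVec_zero_iff p.2).1
      rw [show star p.2 = p.2 from funext fun i => star_trivial _] at this
      exact this hq0
    -- the derivative of the quadratic form at p.1
    set D : ℝ := ∑ i, ∑ j, p.2 i * (V p.1 * Sig p.1 * V p.1 - Q p.1) i j * p.2 j with hDdef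
    have hgd : HasDerivAt (fun s => p.2 ⬝ᵥ V s *ᵥ p.2) D p.1 := by
      have hrw : (fun s => p.2 ⬝ᵥ V s *ᵥ p.2)
          = fun s => ∑ i, ∑ j, p.2 i * V s i j * p.2 j := by
        funext s; exact quad_eq _ _
      rw [hrw, hDdef]
      apply HasDerivAt.fun_sum
      intro i _
      apply HasDerivAt.fun_sum
      intro j _
      exact ((hVode p.1 hpIcc0 i j).const_mul (p.2 i)).mul_const (p.2 j)
    have hDval : D = -(p.2 ⬝ᵥ Q p.1 *ᵥ p.2) := by
      rw [hDdef, ← quad_eq, Matrix.sub_mulVec, dotProduct_sub,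
        ← Matrix.mulVec_mulVec, hker, Matrix.mulVec_zero, dotProduct_zero]
      ring
    have hDneg : D < 0 := by
      rw [hDval, neg_lt, neg_zero]
      have := (hQPd p.1 hpIcc0).dotProduct_mulVec_pos hp2ne
      rwa [show star p.2 = p.2 from funext fun i => star_trivial _] at this
    -- but the right derivative must be nonnegative
    have hslope : Filter.Tendsto (slope (fun s => p.2 ⬝ᵥ V s *ᵥ p.2) p.1)
        (nhdsWithin p.1 (Set.Ioi p.1)) (nhds D) := by
      have h1 := (hgd.hasDerivWithinAt (s := Set.Ioi p.1))
      rw [hasDerivWithinAt_iff_tendsto_slope] at h1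
      rwa [Set.diff_singleton_eq_self (Set.notMem_Ioi.mpr le_rfl)] at h1
    have hDnonneg : 0 ≤ D := by
      refine ge_of_tendsto hslope ?_
      filter_upwards [Ioc_mem_nhdsGT hpltT] with s hs
      have hpos : 0 < p.2 ⬝ᵥ V s *ᵥ p.2 := by
        have := (hpdafter s hs.1 hs.2).dotProduct_mulVec_pos hp2ne
        rwa [show star p.2 = p.2 from funext fun i => star_trivial _] at this
      rw [slope_def_field]
      apply div_nonneg
      · rw [hq0]; simpa using hpos.le
      · linarith [hs.1]
    linarith
  -- Part 2 : the Loewner bound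
  intro t ht
  refine ⟨hpd t ht, ?_⟩
  have htT : t ≤ T := ht.2
  have hsubIcc : Set.Icc t T ⊆ Set.Icc 0 T := Set.Icc_subset_Icc ht.1 le_rfl
  have huIcc : Set.uIcc t T ⊆ Set.Icc 0 T := by
    rw [Set.uIcc_of_le htT]; exact hsubIcc
  have hQint : ∀ i j, IntervalIntegrable (fun s => Q s i j) MeasureTheory.volume t T :=
    fun i j => ((hQCont i j).mono huIcc).intervalIntegrable
  have hFint : ∀ i j,
      IntervalIntegrable (fun s => (V s * Sig s * V s) i j) MeasureTheory.volume t T :=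
    fun i j => ((hFcont i j).mono huIcc).intervalIntegrable
  have hFTC : ∀ i j,
      (∫ s in t..T, ((V s * Sig s * V s) i j - Q s i j)) = V T i j - V t i j := by
    intro i j
    apply intervalIntegral.integral_eq_sub_of_hasDerivAt
    · intro s hs
      have hs' := huIcc hs
      have := hVode s hs' i j
      simpa [Matrix.sub_apply] using this
    · exact (((hFcont i j).sub (hQCont i j)).mono huIcc).intervalIntegrable
  have hW : ∀ i j, (V T + Matrix.of (fun i j => ∫ s in t..T, Q s i j) - V t) i j
      = ∫ s in t..T, (V s * Sig s * V s) i j := by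
    intro i j
    have h1 := hFTC i j
    rw [intervalIntegral.integral_sub (hFint i j) (hQint i j)] at h1
    simp only [Matrix.sub_apply, Matrix.add_apply, Matrix.of_apply]
    linarith
  -- Hermitian part
  have hWherm : (V T + Matrix.of (fun i j => ∫ s in t..T, Q s i j) - V t).IsHermitian := by
    have hsymm : ∀ i j, (∫ s in t..T, (V s * Sig s * V s) i j)
        = ∫ s in t..T, (V s * Sig s * V s) j i := by
      intro i j
      apply intervalIntegral.integral_congr
      intro s hs
      have hs' := huIcc hs
      have hs2 : star ((V s * Sig s * V s) j i) = (V s * Sig s * V s) i j :=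
        (hFpsd s hs').1.apply i j
      show (V s * Sig s * V s) i j = (V s * Sig s * V s) j i
      rw [← hs2, star_trivial]
    rw [Matrix.IsHermitian, Matrix.conjTranspose_eq_transpose_of_trivial]
    ext i j
    rw [Matrix.transpose_apply, hW i j, hW j i, hsymm j i]
  refine Matrix.PosSemidef.of_dotProduct_mulVec_nonneg hWherm fun x => ?_
  rw [show star x = x from funext fun i => star_trivial _, quad_eq]
  have hterm : ∀ (i j : Fin d),
      x i * ((V T + Matrix.of (fun i j => ∫ s in t..T, Q s i j) - V t) i j) * x j
      = ∫ s in t..T, x i * (V s * Sig s * V s) i j * x j := by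
    intro i j
    rw [hW i j, ← intervalIntegral.integral_const_mul, ← intervalIntegral.integral_mul_const]
  have htermint : ∀ (i j : Fin d),
      IntervalIntegrable (fun s => x i * (V s * Sig s * V s) i j * x j)
        MeasureTheory.volume t T :=
    fun i j => ((hFint i j).const_mul (x i)).mul_const (x j)
  calc (0:ℝ) ≤ ∫ s in t..T, ∑ i, ∑ j, x i * (V s * Sig s * V s) i j * x j := by
        apply intervalIntegral.integral_nonneg htT
        intro s hs
        have hs' : s ∈ Set.Icc (0:ℝ) T := hsubIcc hs
        rw [← quad_eq]
        have := (hFpsd s hs').dotProduct_mulVec_nonneg x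
        rwa [show star x = x from funext fun i => star_trivial _] at this
    _ = ∑ i, ∫ s in t..T, ∑ j, x i * (V s * Sig s * V s) i j * x j := by
        apply intervalIntegral.integral_finset_sum
        intro i _
        exact intervalIntegrable_sum _ fun j _ => htermint i j
    _ = ∑ i, ∑ j, ∫ s in t..T, x i * (V s * Sig s * V s) i j * x j := by
        refine Finset.sum_congr rfl fun i _ => ?_
        apply intervalIntegral.integral_finset_sum
        intro j _
        exact htermint i j
    _ = ∑ i, ∑ j, x i * ((V T + Matrix.of (fun i j => ∫ s in t..T, Q s i j) - V t) i j) * x j :=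
        Finset.sum_congr rfl fun i _ => Finset.sum_congr rfl fun j _ => (hterm i j).symm
end

section
/- Let Y₁₁, Y₁₂, Y₂₂ be real random variables on a probability space such that almost surely Y₁₁ > 0, Y₂₂ > 0 and Y₁₂² ≤ Y₁₁ Y₂₂, and set ρ = Y₁₂ / √(Y₁₁ Y₂₂). Define φ(s₁₁, s₁₂, s₂₂) = E[ exp( −(1/2)( s₁₁ Y₁₁ + 2 s₁₂ Y₁₂ + s₂₂ Y₂₂ ) ) ]. Then for every integer k ≥ 1, E[ρ^k] = ( (−1)^k / ( 2^k Γ(k/2)² ) ) ∫_0^∞ ∫_0^∞ s₁₁^{k/2 − 1} s₂₂^{k/2 − 1} (∂^k φ / ∂ s₁₂^k)(s₁₁, 0, s₂₂) ds₁₁ ds₂₂, where ∂^k φ / ∂ s₁₂^k denotes the k-th partial derivative of φ in its second argument. -/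
open MeasureTheory ProbabilityTheory Filter

private lemma aux_pow_mul_exp_le (m : ℕ) {b t : ℝ} (hb : 0 < b) (ht : 0 ≤ t) :
    t ^ m * Real.exp (-(b * t)) ≤ (2 * m / b) ^ m := by
  rcases Nat.eq_zero_or_pos m with hm | hm
  · subst hm
    simpa using Real.exp_le_one_iff.mpr (by nlinarith : -(b * t) ≤ 0)
  · have hm' : (0:ℝ) < m := by exact_mod_cast hm
    have h2 : b * t / (2 * m) ≤ Real.exp (b * t / (2 * m)) := by
      have := Real.add_one_le_exp (b * t / (2 * m))
      linarith
    have h1 : t ≤ 2 * m / b * Real.exp (b * t / (2 * m)) := by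
      calc t = (2 * m / b) * (b * t / (2 * m)) := by field_simp
        _ ≤ (2 * m / b) * Real.exp (b * t / (2 * m)) := by
            exact mul_le_mul_of_nonneg_left h2 (by positivity)
    have h3 : t ^ m ≤ (2 * m / b) ^ m * Real.exp (b * t / 2) := by
      calc t ^ m ≤ (2 * m / b * Real.exp (b * t / (2 * m))) ^ m := pow_le_pow_left₀ ht h1 m
        _ = (2 * m / b) ^ m * Real.exp (b * t / (2 * m)) ^ m := mul_pow _ _ _
        _ = (2 * m / b) ^ m * Real.exp (b * t / (2 * m) * m) := by
            rw [← Real.exp_nat_mul]; ring_nf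
        _ = (2 * m / b) ^ m * Real.exp (b * t / 2) := by
            congr 2; field_simp
    calc t ^ m * Real.exp (-(b * t))
        ≤ (2 * m / b) ^ m * Real.exp (b * t / 2) * Real.exp (-(b * t)) := by
          exact mul_le_mul_of_nonneg_right h3 (Real.exp_nonneg _)
      _ = (2 * m / b) ^ m * Real.exp (-(b * t / 2)) := by
          rw [mul_assoc, ← Real.exp_add]; ring_nf
      _ ≤ (2 * m / b) ^ m * 1 := by
          exact mul_le_mul_of_nonneg_left (Real.exp_le_one_iff.mpr (by nlinarith)) (by positivity)
      _ = (2 * m / b) ^ m := mul_one _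

private lemma aux_rpow_le_pow_add_one {t : ℝ} (ht : 0 ≤ t) {κ : ℝ} (hκ0 : 0 ≤ κ) (k : ℕ)
    (hκ : κ ≤ k) : t ^ κ ≤ t ^ k + 1 := by
  rcases le_or_gt t 1 with h | h
  · have h1 := Real.rpow_le_one ht h hκ0
    have h2 : (0:ℝ) ≤ t ^ k := pow_nonneg ht k
    linarith
  · have h1 : t ^ κ ≤ t ^ (k:ℝ) := Real.rpow_le_rpow_of_exponent_le h.le hκ
    rw [Real.rpow_natCast] at h1
    linarith

private lemma integrableOn_rpow_mul_exp {a r : ℝ} (ha : 0 < a) (hr : 0 < r) :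
    IntegrableOn (fun t : ℝ => t ^ (a - 1) * Real.exp (-(r * t))) (Set.Ioi 0) := by
  have h0 := Real.GammaIntegral_convergent ha
  have h := (integrableOn_Ioi_comp_mul_left_iff
    (fun x : ℝ => Real.exp (-x) * x ^ (a - 1)) 0 hr).mpr (by rwa [mul_zero])
  refine (h.const_mul (r ^ (1 - a))).congr ?_
  filter_upwards [ae_restrict_mem measurableSet_Ioi] with x hx
  have hx0 : (0:ℝ) < x := hx
  have hrr : r ^ (1 - a) * r ^ (a - 1) = 1 := by
    rw [← Real.rpow_add hr]; norm_num
  calc r ^ (1 - a) * (Real.exp (-(r * x)) * (r * x) ^ (a - 1))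
      = r ^ (1 - a) * (Real.exp (-(r * x)) * (r ^ (a-1) * x ^ (a - 1))) := by
        rw [Real.mul_rpow hr.le hx0.le]
    _ = (r ^ (1 - a) * r ^ (a - 1)) * (x ^ (a - 1) * Real.exp (-(r * x))) := by ring
    _ = x ^ (a - 1) * Real.exp (-(r * x)) := by rw [hrr, one_mul]

private lemma swap_gamma {Ω : Type*} [MeasurableSpace Ω] (P : Measure Ω) [IsProbabilityMeasure P]
    {W g : Ω → ℝ} (hW : Measurable W) (hg : Measurable g)
    (hWpos : ∀ᵐ ω ∂P, 0 < W ω) {κ : ℝ} (hκ : 0 < κ)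
    (hgi : Integrable (fun ω => |g ω| * (2 / W ω) ^ κ) P) :
    ∫ t in Set.Ioi (0:ℝ), ∫ ω, t ^ (κ - 1) * (g ω * Real.exp (-(W ω / 2 * t))) ∂P
      = Real.Gamma κ * ∫ ω, g ω * (2 / W ω) ^ κ ∂P := by
  set f : ℝ → Ω → ℝ := fun t ω => t ^ (κ - 1) * (g ω * Real.exp (-(W ω / 2 * t))) with hf
  have hmeas : AEStronglyMeasurable (Function.uncurry f)
      ((volume.restrict (Set.Ioi (0:ℝ))).prod P) := by
    apply Measurable.aestronglyMeasurable
    have : Measurable (Function.uncurry f) := by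
      simp only [hf, Function.uncurry]
      fun_prop
    exact this
  have hsec : ∀ᵐ ω ∂P, Integrable (fun t => f t ω) (volume.restrict (Set.Ioi (0:ℝ))) := by
    filter_upwards [hWpos] with ω hw
    have h1 := (integrableOn_rpow_mul_exp hκ (by positivity : 0 < W ω / 2)).const_mul (g ω)
    exact h1.congr (ae_of_all _ fun t => by simp only [hf]; ring)
  have hkey : ∀ᵐ ω ∂P, (∫ t in Set.Ioi (0:ℝ), ‖f t ω‖)
      = Real.Gamma κ * (|g ω| * (2 / W ω) ^ κ) := by
    filter_upwards [hWpos] with ω hw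
    have heq1 : ∀ t ∈ Set.Ioi (0:ℝ), ‖f t ω‖
        = |g ω| * (t ^ (κ - 1) * Real.exp (-(W ω / 2 * t))) := by
      intro t ht
      have ht0 : (0:ℝ) < t := ht
      simp only [hf, Real.norm_eq_abs, abs_mul, Real.abs_exp,
        abs_of_nonneg (Real.rpow_nonneg ht0.le _)]
      ring
    rw [setIntegral_congr_fun measurableSet_Ioi heq1, integral_const_mul,
      Real.integral_rpow_mul_exp_neg_mul_Ioi hκ (by positivity : 0 < W ω / 2), one_div_div]
    ring
  have hnormint : Integrable (fun ω => ∫ t in Set.Ioi (0:ℝ), ‖f t ω‖) P := by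
    refine (hgi.const_mul (Real.Gamma κ)).congr ?_
    filter_upwards [hkey] with ω h
    rw [h]
  have hint : Integrable (Function.uncurry f)
      ((volume.restrict (Set.Ioi (0:ℝ))).prod P) :=
    (integrable_prod_iff' hmeas).mpr ⟨hsec, hnormint⟩
  calc ∫ t in Set.Ioi (0:ℝ), (∫ ω, f t ω ∂P)
      = ∫ ω, (∫ t in Set.Ioi (0:ℝ), f t ω) ∂P := integral_integral_swap hint
    _ = ∫ ω, Real.Gamma κ * (g ω * (2 / W ω) ^ κ) ∂P := by
        apply integral_congr_ae
        filter_upwards [hWpos] with ω hw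
        have heq : (fun t : ℝ => f t ω)
            = fun t => g ω * (t ^ (κ - 1) * Real.exp (-(W ω / 2 * t))) := by
          funext t; simp only [hf]; ring
        rw [heq, integral_const_mul,
          Real.integral_rpow_mul_exp_neg_mul_Ioi hκ (by positivity : 0 < W ω / 2), one_div_div]
        ring
    _ = Real.Gamma κ * ∫ ω, g ω * (2 / W ω) ^ κ ∂P := integral_const_mul _ _

private lemma deriv_key {Ω : Type*} [MeasurableSpace Ω] (P : Measure Ω) [IsProbabilityMeasure P]
    (Y₁₁ Y₁₂ Y₂₂ : Ω → ℝ)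
    (hm₁₁ : Measurable Y₁₁) (hm₁₂ : Measurable Y₁₂) (hm₂₂ : Measurable Y₂₂)
    (hpos : ∀ᵐ ω ∂P, 0 < Y₁₁ ω ∧ 0 < Y₂₂ ω ∧ (Y₁₂ ω) ^ 2 ≤ Y₁₁ ω * Y₂₂ ω)
    (φ : ℝ → ℝ → ℝ → ℝ)
    (hφ : ∀ s₁₁ s₁₂ s₂₂, φ s₁₁ s₁₂ s₂₂ =
      ∫ ω, Real.exp (-(1 / 2) * (s₁₁ * Y₁₁ ω + 2 * s₁₂ * Y₁₂ ω + s₂₂ * Y₂₂ ω)) ∂P)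
    {s₁₁ s₂₂ : ℝ} (h₁ : 0 < s₁₁) (h₂ : 0 < s₂₂) (k : ℕ) :
    iteratedDeriv k (fun s => φ s₁₁ s s₂₂) 0 =
      ∫ ω, (-Y₁₂ ω) ^ k * Real.exp (-(1 / 2) * (s₁₁ * Y₁₁ ω + s₂₂ * Y₂₂ ω)) ∂P := by
  have hc0 : 0 < min s₁₁ s₂₂ := lt_min h₁ h₂
  set c := min s₁₁ s₂₂ with hcdef
  set r := c / 4 with hrdef
  have hr : 0 < r := by positivity
  set G : ℕ → ℝ → Ω → ℝ := fun j s ω =>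
    (-Y₁₂ ω) ^ j * Real.exp (-(1 / 2) * (s₁₁ * Y₁₁ ω + 2 * s * Y₁₂ ω + s₂₂ * Y₂₂ ω)) with hG
  have hbd : ∀ j : ℕ, ∀ᵐ ω ∂P, ∀ s ∈ Metric.ball (0:ℝ) r,
      |G j s ω| ≤ (2 * j / (c / 4)) ^ j := by
    intro j
    filter_upwards [hpos] with ω hω
    obtain ⟨hA, hC, hAC⟩ := hω
    intro s hs
    rw [Metric.mem_ball, dist_zero_right, Real.norm_eq_abs] at hs
    have hB : |Y₁₂ ω| ≤ (Y₁₁ ω + Y₂₂ ω) / 2 := by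
      nlinarith [sq_abs (Y₁₂ ω), abs_nonneg (Y₁₂ ω), sq_nonneg (Y₁₁ ω - Y₂₂ ω),
        sq_nonneg (|Y₁₂ ω| - (Y₁₁ ω + Y₂₂ ω) / 2)]
    have hsB : |s * Y₁₂ ω| ≤ c / 4 * ((Y₁₁ ω + Y₂₂ ω) / 2) := by
      rw [abs_mul]
      exact mul_le_mul hs.le hB (abs_nonneg _) (by positivity)
    have hsB' := (abs_le.mp hsB).1
    have hexp : -(1/2) * (s₁₁ * Y₁₁ ω + 2 * s * Y₁₂ ω + s₂₂ * Y₂₂ ω)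
        ≤ -(c / 4 * (Y₁₁ ω + Y₂₂ ω)) := by
      have h1 : c * Y₁₁ ω ≤ s₁₁ * Y₁₁ ω :=
        mul_le_mul_of_nonneg_right (min_le_left _ _) hA.le
      have h2 : c * Y₂₂ ω ≤ s₂₂ * Y₂₂ ω :=
        mul_le_mul_of_nonneg_right (min_le_right _ _) hC.le
      nlinarith
    have habs : |G j s ω| = |Y₁₂ ω| ^ j
        * Real.exp (-(1/2) * (s₁₁ * Y₁₁ ω + 2 * s * Y₁₂ ω + s₂₂ * Y₂₂ ω)) := by
      simp only [hG, abs_mul, abs_pow, abs_neg, Real.abs_exp]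
    rw [habs]
    calc |Y₁₂ ω| ^ j * Real.exp (-(1/2) * (s₁₁ * Y₁₁ ω + 2 * s * Y₁₂ ω + s₂₂ * Y₂₂ ω))
        ≤ (Y₁₁ ω + Y₂₂ ω) ^ j * Real.exp (-(c / 4 * (Y₁₁ ω + Y₂₂ ω))) := by
          apply mul_le_mul
          · exact pow_le_pow_left₀ (abs_nonneg _) (by linarith) j
          · exact Real.exp_le_exp.mpr hexp
          · exact Real.exp_nonneg _
          · positivity
      _ ≤ (2 * j / (c / 4)) ^ j :=
          aux_pow_mul_exp_le j (by positivity) (by linarith)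
  have hGmeas : ∀ (j : ℕ) (s : ℝ), AEStronglyMeasurable (G j s) P := by
    intro j s
    apply Measurable.aestronglyMeasurable
    simp only [hG]
    fun_prop
  have hInt : ∀ (j : ℕ), ∀ s ∈ Metric.ball (0:ℝ) r, Integrable (G j s) P := by
    intro j s hs
    refine (integrable_const ((2 * (j:ℝ) / (c / 4)) ^ j)).mono' (hGmeas j s) ?_
    filter_upwards [hbd j] with ω h
    rw [Real.norm_eq_abs]
    exact h s hs
  have hDeriv : ∀ (j : ℕ), ∀ s ∈ Metric.ball (0:ℝ) r,
      HasDerivAt (fun u => ∫ ω, G j u ω ∂P) (∫ ω, G (j+1) s ω ∂P) s := by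
    intro j s hs
    have hsd : dist s 0 < r := Metric.mem_ball.mp hs
    have hε : 0 < r - dist s 0 := by linarith
    have hsub : Metric.ball s (r - dist s 0) ⊆ Metric.ball 0 r := by
      intro x hx
      rw [Metric.mem_ball] at hx ⊢
      have := dist_triangle x s 0
      linarith
    have H := hasDerivAt_integral_of_dominated_loc_of_deriv_le (Metric.ball_mem_nhds s hε)
      (Eventually.of_forall fun u => hGmeas j u) (hInt j s hs) (hGmeas (j+1) s)
      (bound := fun _ => (2 * ((j:ℝ)+1) / (c / 4)) ^ (j+1))
      ?_ (integrable_const _) ?_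
    · exact H.2
    · filter_upwards [hbd (j+1)] with ω h x hx
      rw [Real.norm_eq_abs]
      have := h x (hsub hx)
      simpa using this
    · refine Eventually.of_forall fun ω x _ => ?_
      have hL : HasDerivAt
          (fun u : ℝ => -(1/2) * (s₁₁ * Y₁₁ ω + 2 * u * Y₁₂ ω + s₂₂ * Y₂₂ ω))
          (-Y₁₂ ω) x := by
        have heq : (fun u : ℝ => -(1/2) * (s₁₁ * Y₁₁ ω + 2 * u * Y₁₂ ω + s₂₂ * Y₂₂ ω))
            = fun u : ℝ => -Y₁₂ ω * u + (-(1/2) * (s₁₁ * Y₁₁ ω + s₂₂ * Y₂₂ ω)) := by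
          funext u; ring
        rw [heq]
        simpa using ((hasDerivAt_id x).const_mul (-Y₁₂ ω)).add_const
          (-(1/2) * (s₁₁ * Y₁₁ ω + s₂₂ * Y₂₂ ω))
      have h2 := hL.exp
      have h3 := h2.const_mul ((-Y₁₂ ω) ^ j)
      have hfe : G (j+1) x ω = (-Y₁₂ ω) ^ j *
          (Real.exp (-(1/2) * (s₁₁ * Y₁₁ ω + 2 * x * Y₁₂ ω + s₂₂ * Y₂₂ ω)) * -Y₁₂ ω) := by
        simp only [hG]; ring
      rw [show (fun u => G j u ω) = fun u => (-Y₁₂ ω) ^ j *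
          Real.exp (-(1/2) * (s₁₁ * Y₁₁ ω + 2 * u * Y₁₂ ω + s₂₂ * Y₂₂ ω)) from rfl, hfe]
      exact h3
  have heqOn : ∀ j : ℕ, ∀ s ∈ Metric.ball (0:ℝ) r,
      iteratedDeriv j (fun s => φ s₁₁ s s₂₂) s = ∫ ω, G j s ω ∂P := by
    intro j
    induction j with
    | zero =>
      intro s hs
      simp only [iteratedDeriv_zero, hφ, hG, pow_zero, one_mul]
    | succ j ih =>
      intro s hs
      rw [iteratedDeriv_succ]
      have hev : iteratedDeriv j (fun s => φ s₁₁ s s₂₂) =ᶠ[nhds s]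
          fun u => ∫ ω, G j u ω ∂P :=
        eventually_of_mem (Metric.isOpen_ball.mem_nhds hs) ih
      rw [hev.deriv_eq]
      exact (hDeriv j s hs).deriv
  rw [heqOn k 0 (Metric.mem_ball_self hr)]
  apply integral_congr_ae
  refine Eventually.of_forall fun ω => ?_
  simp only [hG]
  norm_num

theorem stmt_4 {Ω : Type*} [MeasurableSpace Ω] (P : Measure Ω) [IsProbabilityMeasure P]
    (Y₁₁ Y₁₂ Y₂₂ : Ω → ℝ)
    (hm₁₁ : Measurable Y₁₁) (hm₁₂ : Measurable Y₁₂) (hm₂₂ : Measurable Y₂₂)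
    (hpos : ∀ᵐ ω ∂P, 0 < Y₁₁ ω ∧ 0 < Y₂₂ ω ∧ (Y₁₂ ω) ^ 2 ≤ Y₁₁ ω * Y₂₂ ω)
    (ρ : Ω → ℝ) (hρ : ∀ ω, ρ ω = Y₁₂ ω / Real.sqrt (Y₁₁ ω * Y₂₂ ω))
    (φ : ℝ → ℝ → ℝ → ℝ)
    (hφ : ∀ s₁₁ s₁₂ s₂₂, φ s₁₁ s₁₂ s₂₂ =
      ∫ ω, Real.exp (-(1 / 2) * (s₁₁ * Y₁₁ ω + 2 * s₁₂ * Y₁₂ ω + s₂₂ * Y₂₂ ω)) ∂P)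
    (k : ℕ) (hk : 1 ≤ k) :
    ∫ ω, (ρ ω) ^ k ∂P
      = ((-1 : ℝ) ^ k / (2 ^ k * (Real.Gamma ((k : ℝ) / 2)) ^ 2)) *
        ∫ s₁₁ in Set.Ioi (0:ℝ), ∫ s₂₂ in Set.Ioi (0:ℝ),
          s₁₁ ^ ((k : ℝ) / 2 - 1) * s₂₂ ^ ((k : ℝ) / 2 - 1) *
            iteratedDeriv k (fun s => φ s₁₁ s s₂₂) 0 := by
  have hk1 : (1:ℝ) ≤ (k:ℝ) := by exact_mod_cast hk
  have hκ : 0 < (k:ℝ) / 2 := by linarith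
  set κ := (k:ℝ) / 2 with hκdef
  have hκk : κ ≤ (k:ℝ) := by rw [hκdef]; linarith
  have hΓ : 0 < Real.Gamma κ := Real.Gamma_pos_of_pos hκ
  have hApos : ∀ᵐ ω ∂P, 0 < Y₁₁ ω := by filter_upwards [hpos] with ω h using h.1
  have hCpos : ∀ᵐ ω ∂P, 0 < Y₂₂ ω := by filter_upwards [hpos] with ω h using h.2.1
  -- pointwise facts
  have hsq : ∀ ω, 0 < Y₁₁ ω → 0 < Y₂₂ ω →
      Real.sqrt (Y₁₁ ω * Y₂₂ ω) ^ k = (Y₁₁ ω * Y₂₂ ω) ^ κ := by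
    intro ω hA hC
    rw [← Real.rpow_natCast (Real.sqrt (Y₁₁ ω * Y₂₂ ω)) k, Real.sqrt_eq_rpow,
      ← Real.rpow_mul (mul_pos hA hC).le]
    congr 1
    rw [hκdef]; ring
  have hBk : ∀ ω, 0 < Y₁₁ ω → 0 < Y₂₂ ω → (Y₁₂ ω) ^ 2 ≤ Y₁₁ ω * Y₂₂ ω →
      |Y₁₂ ω| ^ k ≤ (Y₁₁ ω * Y₂₂ ω) ^ κ := by
    intro ω hA hC hB2
    have h1 : |Y₁₂ ω| ≤ Real.sqrt (Y₁₁ ω * Y₂₂ ω) := by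
      rw [← Real.sqrt_sq_eq_abs]
      exact Real.sqrt_le_sqrt hB2
    calc |Y₁₂ ω| ^ k ≤ Real.sqrt (Y₁₁ ω * Y₂₂ ω) ^ k :=
          pow_le_pow_left₀ (abs_nonneg _) h1 k
      _ = (Y₁₁ ω * Y₂₂ ω) ^ κ := hsq ω hA hC
  -- Step 1: inner integral over s₂₂
  have hinner : ∀ u ∈ Set.Ioi (0:ℝ),
      (∫ t in Set.Ioi (0:ℝ), u ^ (κ - 1) * t ^ (κ - 1) *
          iteratedDeriv k (fun s => φ u s t) 0)
      = u ^ (κ - 1) * (Real.Gamma κ *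
          ∫ ω, ((-Y₁₂ ω) ^ k * Real.exp (-(Y₁₁ ω / 2 * u))) * (2 / Y₂₂ ω) ^ κ ∂P) := by
    intro u hu
    have hu0 : (0:ℝ) < u := hu
    have e1 : ∀ t ∈ Set.Ioi (0:ℝ),
        u ^ (κ - 1) * t ^ (κ - 1) * iteratedDeriv k (fun s => φ u s t) 0
        = u ^ (κ - 1) * ∫ ω, t ^ (κ - 1) *
            (((-Y₁₂ ω) ^ k * Real.exp (-(Y₁₁ ω / 2 * u))) *
              Real.exp (-(Y₂₂ ω / 2 * t))) ∂P := by
      intro t ht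
      have ht0 : (0:ℝ) < t := ht
      rw [mul_assoc, deriv_key P Y₁₁ Y₁₂ Y₂₂ hm₁₁ hm₁₂ hm₂₂ hpos φ hφ hu0 ht0 k]
      congr 1
      rw [← integral_const_mul]
      refine integral_congr_ae (Eventually.of_forall fun ω => ?_)
      show t ^ (κ - 1) * ((-Y₁₂ ω) ^ k * Real.exp (-(1 / 2) * (u * Y₁₁ ω + t * Y₂₂ ω)))
          = t ^ (κ - 1) * (((-Y₁₂ ω) ^ k * Real.exp (-(Y₁₁ ω / 2 * u))) *
              Real.exp (-(Y₂₂ ω / 2 * t)))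
      rw [show -(1/2) * (u * Y₁₁ ω + t * Y₂₂ ω)
          = -(Y₁₁ ω / 2 * u) + -(Y₂₂ ω / 2 * t) from by ring, Real.exp_add]
      ring
    rw [setIntegral_congr_fun measurableSet_Ioi e1, integral_const_mul]
    congr 1
    refine swap_gamma P hm₂₂ (by fun_prop) hCpos hκ ?_
    refine (integrable_const ((2:ℝ) ^ κ * ((2 * (k:ℝ) / (u / 2)) ^ k + 1))).mono'
      (by apply Measurable.aestronglyMeasurable; fun_prop) ?_
    filter_upwards [hpos] with ω hω
    obtain ⟨hA, hC, hB2⟩ := hω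
    have hBle := hBk ω hA hC hB2
    have h2C : (0:ℝ) ≤ 2 / Y₂₂ ω := div_nonneg (by norm_num) hC.le
    have hexpeq : Real.exp (-(Y₁₁ ω / 2 * u)) = Real.exp (-(u / 2 * Y₁₁ ω)) := by
      congr 1; ring
    rw [Real.norm_eq_abs, abs_of_nonneg (mul_nonneg (abs_nonneg _)
      (Real.rpow_nonneg h2C _)), abs_mul, abs_pow, abs_neg, Real.abs_exp, hexpeq]
    calc |Y₁₂ ω| ^ k * Real.exp (-(u / 2 * Y₁₁ ω)) * (2 / Y₂₂ ω) ^ κ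
        ≤ (Y₁₁ ω * Y₂₂ ω) ^ κ * Real.exp (-(u / 2 * Y₁₁ ω)) * (2 / Y₂₂ ω) ^ κ := by
          exact mul_le_mul_of_nonneg_right
            (mul_le_mul_of_nonneg_right hBle (Real.exp_nonneg _))
            (Real.rpow_nonneg h2C _)
      _ = ((Y₁₁ ω * Y₂₂ ω) * (2 / Y₂₂ ω)) ^ κ * Real.exp (-(u / 2 * Y₁₁ ω)) := by
          rw [mul_right_comm, ← Real.mul_rpow (mul_pos hA hC).le h2C]
      _ = (2 * Y₁₁ ω) ^ κ * Real.exp (-(u / 2 * Y₁₁ ω)) := by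
          congr 2
          field_simp
      _ = 2 ^ κ * (Y₁₁ ω ^ κ * Real.exp (-(u / 2 * Y₁₁ ω))) := by
          rw [Real.mul_rpow (by norm_num) hA.le]; ring
      _ ≤ 2 ^ κ * ((Y₁₁ ω ^ k + 1) * Real.exp (-(u / 2 * Y₁₁ ω))) := by
          exact mul_le_mul_of_nonneg_left
            (mul_le_mul_of_nonneg_right
              (aux_rpow_le_pow_add_one hA.le hκ.le k hκk) (Real.exp_nonneg _))
            (Real.rpow_nonneg (by norm_num) _)
      _ ≤ 2 ^ κ * ((2 * (k:ℝ) / (u / 2)) ^ k + 1) := by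
          refine mul_le_mul_of_nonneg_left ?_ (Real.rpow_nonneg (by norm_num) _)
          have hb1 := aux_pow_mul_exp_le k (show (0:ℝ) < u / 2 by positivity) hA.le
          have hb2 : Real.exp (-(u / 2 * Y₁₁ ω)) ≤ 1 :=
            Real.exp_le_one_iff.mpr (by nlinarith)
          have hb3 : (0:ℝ) < Real.exp (-(u / 2 * Y₁₁ ω)) := Real.exp_pos _
          nlinarith [pow_nonneg hA.le k]
  -- Step 2: the double integral
  have hstep : (∫ s₁₁ in Set.Ioi (0:ℝ), ∫ s₂₂ in Set.Ioi (0:ℝ),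
        s₁₁ ^ (κ - 1) * s₂₂ ^ (κ - 1) * iteratedDeriv k (fun s => φ s₁₁ s s₂₂) 0)
      = Real.Gamma κ * (Real.Gamma κ *
          ∫ ω, ((-Y₁₂ ω) ^ k * (2 / Y₂₂ ω) ^ κ) * (2 / Y₁₁ ω) ^ κ ∂P) := by
    rw [setIntegral_congr_fun measurableSet_Ioi hinner]
    have e2 : ∀ u ∈ Set.Ioi (0:ℝ),
        u ^ (κ - 1) * (Real.Gamma κ *
          ∫ ω, ((-Y₁₂ ω) ^ k * Real.exp (-(Y₁₁ ω / 2 * u))) * (2 / Y₂₂ ω) ^ κ ∂P)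
        = Real.Gamma κ * ∫ ω, u ^ (κ - 1) *
            (((-Y₁₂ ω) ^ k * (2 / Y₂₂ ω) ^ κ) * Real.exp (-(Y₁₁ ω / 2 * u))) ∂P := by
      intro u hu
      have h5 : (∫ ω, u ^ (κ - 1) *
          (((-Y₁₂ ω) ^ k * (2 / Y₂₂ ω) ^ κ) * Real.exp (-(Y₁₁ ω / 2 * u))) ∂P)
          = u ^ (κ - 1) *
            ∫ ω, ((-Y₁₂ ω) ^ k * Real.exp (-(Y₁₁ ω / 2 * u))) * (2 / Y₂₂ ω) ^ κ ∂P := by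
        rw [integral_const_mul]
        congr 1
        refine integral_congr_ae (Eventually.of_forall fun ω => ?_)
        ring
      rw [h5]; ring
    rw [setIntegral_congr_fun measurableSet_Ioi e2, integral_const_mul]
    congr 1
    refine swap_gamma P hm₁₁ (by fun_prop) hApos hκ ?_
    refine (integrable_const ((4:ℝ) ^ κ)).mono'
      (by apply Measurable.aestronglyMeasurable; fun_prop) ?_
    filter_upwards [hpos] with ω hω
    obtain ⟨hA, hC, hB2⟩ := hω
    have hBle := hBk ω hA hC hB2
    have h2C : (0:ℝ) ≤ 2 / Y₂₂ ω := div_nonneg (by norm_num) hC.le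
    have h2A : (0:ℝ) ≤ 2 / Y₁₁ ω := div_nonneg (by norm_num) hA.le
    rw [Real.norm_eq_abs, abs_of_nonneg (mul_nonneg (abs_nonneg _)
      (Real.rpow_nonneg h2A _)), abs_mul, abs_pow, abs_neg,
      abs_of_nonneg (Real.rpow_nonneg h2C _)]
    calc |Y₁₂ ω| ^ k * (2 / Y₂₂ ω) ^ κ * (2 / Y₁₁ ω) ^ κ
        ≤ (Y₁₁ ω * Y₂₂ ω) ^ κ * (2 / Y₂₂ ω) ^ κ * (2 / Y₁₁ ω) ^ κ := by
          exact mul_le_mul_of_nonneg_right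
            (mul_le_mul_of_nonneg_right hBle (Real.rpow_nonneg h2C _))
            (Real.rpow_nonneg h2A _)
      _ = ((Y₁₁ ω * Y₂₂ ω) * (2 / Y₂₂ ω) * (2 / Y₁₁ ω)) ^ κ := by
          rw [← Real.mul_rpow (mul_pos hA hC).le h2C,
            ← Real.mul_rpow (mul_nonneg (mul_pos hA hC).le h2C) h2A]
      _ = (4:ℝ) ^ κ := by
          congr 1
          field_simp; ring
  rw [hstep]
  have hconst : ∀ I : ℝ,
      (-1:ℝ) ^ k / (2 ^ k * Real.Gamma κ ^ 2) * (Real.Gamma κ * (Real.Gamma κ * I))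
      = ((-1:ℝ) ^ k / 2 ^ k) * I := by
    intro I
    have h2 : ((2:ℝ) ^ k) ≠ 0 := by positivity
    field_simp
  rw [hconst, ← integral_const_mul]
  apply integral_congr_ae
  filter_upwards [hpos] with ω hω
  obtain ⟨hA, hC, hB2⟩ := hω
  have hACpos : 0 < Y₁₁ ω * Y₂₂ ω := mul_pos hA hC
  have h2k : ((2:ℝ) ^ k) ≠ 0 := by positivity
  have hm1 : ((-1:ℝ)) ^ k * ((-1:ℝ)) ^ k = 1 := by
    rw [← mul_pow]; norm_num
  have h4 : (2 / Y₂₂ ω) ^ κ * (2 / Y₁₁ ω) ^ κ = 2 ^ k / (Y₁₁ ω * Y₂₂ ω) ^ κ := by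
    rw [← Real.mul_rpow (div_nonneg (by norm_num) hC.le) (div_nonneg (by norm_num) hA.le),
      show (2 / Y₂₂ ω) * (2 / Y₁₁ ω) = 4 / (Y₁₁ ω * Y₂₂ ω) from by field_simp; ring,
      Real.div_rpow (by norm_num) hACpos.le]
    congr 1
    rw [show (4:ℝ) = (2:ℝ) ^ (2:ℕ) from by norm_num, ← Real.rpow_natCast (2:ℝ) 2,
      ← Real.rpow_mul (by norm_num : (0:ℝ) ≤ 2), ← Real.rpow_natCast (2:ℝ) k]
    congr 1
    rw [hκdef]; push_cast; ring
  rw [hρ ω, div_pow, hsq ω hA hC, mul_assoc, h4,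
    show (-Y₁₂ ω) ^ k = (-1:ℝ) ^ k * Y₁₂ ω ^ k from by rw [neg_pow]]
  refine Eq.symm ?_
  calc (-1:ℝ) ^ k / 2 ^ k * (((-1:ℝ) ^ k * Y₁₂ ω ^ k) * (2 ^ k / (Y₁₁ ω * Y₂₂ ω) ^ κ))
      = ((-1:ℝ) ^ k * (-1:ℝ) ^ k) * (Y₁₂ ω ^ k * (2 ^ k / 2 ^ k) / (Y₁₁ ω * Y₂₂ ω) ^ κ) := by
        ring
    _ = Y₁₂ ω ^ k / (Y₁₁ ω * Y₂₂ ω) ^ κ := by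
        rw [hm1, div_self h2k]; ring
end

section
/- Let X = (X₁, X₂) be an ℝ²-valued stochastic process on [0,1] with almost surely continuous paths such that (i) the components X₁ and X₂ are independent and identically distributed as processes, and (ii) for every 2 × 2 rotation matrix R, the process (R X(t))_{0 ≤ t ≤ 1} has the same law as (X(t))_{0 ≤ t ≤ 1}. Define X̄ = ∫_0^1 X(u) du, X̄₁ = ∫_0^1 X₁(u) du and ψ(v) = E[ exp( −(v/2) ∫_0^1 (X₁(u) − X̄₁)² du ) ] for v ≥ 0. Then for every 2 × 2 real symmetric positive semidefinite matrix S with eigenvalues θ₁² and θ₂², E[ exp( −(1/2) ∫_0^1 (X(u) − X̄) · S (X(u) − X̄) du ) ] = ψ(θ₁²) · ψ(θ₂²). -/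
open MeasureTheory ProbabilityTheory Filter Matrix

noncomputable def pt19 (n k : ℕ) : Set.Icc (0:ℝ) 1 :=
  ⟨min 1 (max 0 ((k:ℝ)/(n:ℝ))),
    le_min zero_le_one (le_max_left 0 _), min_le_left _ _⟩

noncomputable def I19 (f : Set.Icc (0:ℝ) 1 → ℝ) : ℝ :=
  limsup (fun n : ℕ => (∑ k ∈ Finset.range n, f (pt19 n k)) / n) atTop

noncomputable def H19 (f : Set.Icc (0:ℝ) 1 → ℝ) : ℝ :=
  max 0 (limsup (fun n : ℕ =>
    (∑ k ∈ Finset.range n, (f (pt19 n k) - I19 f)^2) / n) atTop)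

lemma I19_meas : Measurable I19 := by
  apply Measurable.limsup
  intro n
  exact (Finset.measurable_sum _ (fun k _ => measurable_pi_apply (pt19 n k))).div_const _

lemma H19_meas : Measurable H19 := by
  apply measurable_const.max
  apply Measurable.limsup
  intro n
  apply Measurable.div_const
  apply Finset.measurable_sum
  intro k _
  exact ((measurable_pi_apply (pt19 n k)).sub I19_meas).pow_const 2

lemma pt19_eq {n k : ℕ} (hk : k < n) : ((pt19 n k : Set.Icc (0:ℝ) 1) : ℝ) = (k:ℝ)/n := by
  have hn0 : (0:ℝ) < n := by exact_mod_cast Nat.pos_of_ne_zero (by omega)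
  have h0 : (0:ℝ) ≤ (k:ℝ)/n := div_nonneg (Nat.cast_nonneg k) hn0.le
  have h1 : (k:ℝ)/n ≤ 1 := by
    rw [div_le_one hn0]; exact_mod_cast hk.le
  simp [pt19, max_eq_right h0, min_eq_right h1]

lemma sum19_eq {n : ℕ} (F : ℝ → ℝ) :
    (∑ k ∈ Finset.range n, F ((pt19 n k : Set.Icc (0:ℝ) 1) : ℝ)) =
      ∑ k ∈ Finset.range n, F ((k:ℝ)/n) := by
  apply Finset.sum_congr rfl
  intro k hk
  rw [pt19_eq (Finset.mem_range.1 hk)]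

lemma riemann19 {F : ℝ → ℝ} (hF : ContinuousOn F (Set.Icc 0 1)) :
    Tendsto (fun n : ℕ => (∑ k ∈ Finset.range n, F ((k:ℝ)/(n:ℝ))) / n) atTop
      (nhds (∫ u in (0:ℝ)..1, F u)) := by
  have hucont : UniformContinuousOn F (Set.Icc 0 1) :=
    isCompact_Icc.uniformContinuousOn_of_continuous hF
  rw [Metric.tendsto_atTop]
  intro ε hε
  obtain ⟨δ, hδ, hδ'⟩ := Metric.uniformContinuousOn_iff.1 hucont (ε/2) (by linarith)
  obtain ⟨N, hN⟩ := exists_nat_gt (1/δ)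
  refine ⟨N+1, fun n hn => ?_⟩
  have hn0 : 0 < n := by omega
  have hn0' : (0:ℝ) < n := by exact_mod_cast hn0
  have hNn : (1:ℝ)/δ < n := lt_of_lt_of_le hN (by exact_mod_cast by omega)
  have hδn : 1/(n:ℝ) < δ := by
    rw [div_lt_iff₀ hn0']
    rw [div_lt_iff₀ hδ] at hNn
    nlinarith
  set a : ℕ → ℝ := fun k => (k:ℝ)/n with ha
  have hle : ∀ k : ℕ, a k ≤ a (k+1) := by
    intro k
    have : (k:ℝ) ≤ (k:ℝ)+1 := by linarith
    simp only [ha]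
    gcongr
    push_cast; linarith
  have hmem : ∀ k : ℕ, k < n → Set.uIcc (a k) (a (k+1)) ⊆ Set.Icc 0 1 := by
    intro k hk
    rw [Set.uIcc_of_le (hle k)]
    apply Set.Icc_subset_Icc
    · exact div_nonneg (Nat.cast_nonneg k) hn0'.le
    · rw [div_le_one hn0']
      push_cast
      have : (k:ℝ) + 1 ≤ n := by exact_mod_cast hk
      linarith
  have hint : ∀ k : ℕ, k < n → IntervalIntegrable F volume (a k) (a (k+1)) := by
    intro k hk
    exact (hF.mono (hmem k hk)).intervalIntegrable
  have htot : ∑ k ∈ Finset.range n, ∫ u in a k..a (k+1), F u = ∫ u in (0:ℝ)..1, F u := by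
    rw [intervalIntegral.sum_integral_adjacent_intervals hint]
    have h0 : a 0 = 0 := by simp [ha]
    have h1 : a n = 1 := by simp [ha]; omega
    rw [h0, h1]
  have hdiff : ∀ k : ℕ, a (k+1) - a k = 1/n := by
    intro k
    simp only [ha]
    push_cast
    field_simp
    ring
  have hkey : ∀ k ∈ Finset.range n, |F (a k) / n - ∫ u in a k..a (k+1), F u| ≤ ε/2 * (1/n) := by
    intro k hk
    rw [Finset.mem_range] at hk
    have h1 : (∫ u in a k..a (k+1), (F (a k) - F u)) = F (a k) / n - ∫ u in a k..a (k+1), F u := by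
      rw [intervalIntegral.integral_sub intervalIntegrable_const (hint k hk),
        intervalIntegral.integral_const, hdiff k, smul_eq_mul]
      ring
    rw [← h1]
    have := intervalIntegral.norm_integral_le_of_norm_le_const (C := ε/2)
      (f := fun u => F (a k) - F u) (a := a k) (b := a (k+1)) ?_
    · rw [Real.norm_eq_abs] at this
      calc |∫ u in a k..a (k+1), (F (a k) - F u)| ≤ ε/2 * |a (k+1) - a k| := this
        _ = ε/2 * (1/n) := by rw [hdiff k, abs_of_pos (by positivity)]
    · intro x hx
      rw [Set.uIoc_of_le (hle k)] at hx
      have hxm : x ∈ Set.Icc (0:ℝ) 1 := hmem k hk (Set.mem_uIcc.2 (Or.inl ⟨hx.1.le, hx.2⟩))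
      have hakm : a k ∈ Set.Icc (0:ℝ) 1 := hmem k hk (Set.left_mem_uIcc)
      have hdist : dist (a k) x < δ := by
        rw [Real.dist_eq, abs_of_nonpos (by linarith [hx.1.le])]
        have : x - a k ≤ 1/n := by
          have := hx.2; have := hdiff k; linarith
        linarith
      have := hδ' (a k) hakm x hxm hdist
      rw [Real.dist_eq] at this
      rw [Real.norm_eq_abs]
      exact this.le
  rw [Real.dist_eq, ← htot, Finset.sum_div, ← Finset.sum_sub_distrib]
  calc |∑ k ∈ Finset.range n, (F (a k) / n - ∫ u in a k..a (k+1), F u)|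
      ≤ ∑ k ∈ Finset.range n, |F (a k) / n - ∫ u in a k..a (k+1), F u| :=
        Finset.abs_sum_le_sum_abs _ _
    _ ≤ ∑ _k ∈ Finset.range n, ε/2 * (1/n) := Finset.sum_le_sum hkey
    _ = ε/2 := by
        rw [Finset.sum_const, Finset.card_range, nsmul_eq_mul]
        field_simp
    _ < ε := by linarith

lemma I19_eq {F : ℝ → ℝ} (hF : ContinuousOn F (Set.Icc 0 1)) :
    I19 (fun t => F t) = ∫ u in (0:ℝ)..1, F u := by
  have h : (fun n : ℕ => (∑ k ∈ Finset.range n, F ((pt19 n k : Set.Icc (0:ℝ) 1) : ℝ)) / n)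
      = fun n : ℕ => (∑ k ∈ Finset.range n, F ((k:ℝ)/n)) / n := by
    funext n; rw [sum19_eq]
  rw [I19, h]
  exact (riemann19 hF).limsup_eq

lemma H19_eq {F : ℝ → ℝ} (hF : ContinuousOn F (Set.Icc 0 1)) :
    H19 (fun t => F t) = ∫ u in (0:ℝ)..1, (F u - ∫ s in (0:ℝ)..1, F s)^2 := by
  set c := I19 (fun t : Set.Icc (0:ℝ) 1 => F t) with hc
  have hc' : c = ∫ u in (0:ℝ)..1, F u := I19_eq hF
  set G : ℝ → ℝ := fun u => (F u - c)^2 with hG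
  have hGc : ContinuousOn G (Set.Icc 0 1) := ((hF.sub continuousOn_const).pow 2)
  have h : (fun n : ℕ =>
      (∑ k ∈ Finset.range n, ((fun t : Set.Icc (0:ℝ) 1 => F t) (pt19 n k) - c)^2) / n)
      = fun n : ℕ => (∑ k ∈ Finset.range n, G ((k:ℝ)/n)) / n := by
    funext n
    congr 1
    exact sum19_eq G
  rw [H19, ← hc, h, (riemann19 hGc).limsup_eq]
  rw [max_eq_right]
  · simp only [hG, hc']
  · rw [hG]
    apply intervalIntegral.integral_nonneg zero_le_one
    intro u _; positivity

lemma spectral19 (S : Matrix (Fin 2) (Fin 2) ℝ) (hSsymm : S.IsSymm)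
    (d₁ d₂ : ℝ) (htr : S.trace = d₁ + d₂) (hdet : S.det = d₁ * d₂) :
    ∃ p q : ℝ, p^2 + q^2 = 1 ∧ d₁*p^2 + d₂*q^2 = S 0 0 ∧ (d₁ - d₂)*(p*q) = S 0 1 := by
  have hsym : S 0 1 = S 1 0 := hSsymm.apply 1 0
  have htr' : S 0 0 + S 1 1 = d₁ + d₂ := by rw [Matrix.trace_fin_two] at htr; exact htr
  have hdet' : S 0 0 * S 1 1 - S 0 1 * S 1 0 = d₁ * d₂ := by
    rw [Matrix.det_fin_two] at hdet; exact hdet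
  have key : (S 0 0 - d₁) * (S 0 0 - d₂) = -(S 0 1)^2 := by
    linear_combination S 0 0 * htr' - hdet' + S 0 1 * hsym
  by_cases hb : S 0 1 = 0
  · have h0 : (S 0 0 - d₁) * (S 0 0 - d₂) = 0 := by rw [key, hb]; ring
    rcases mul_eq_zero.1 h0 with h | h
    · exact ⟨1, 0, by ring, by rw [sub_eq_zero] at h; rw [← h]; ring, by rw [hb]; ring⟩
    · exact ⟨0, 1, by ring, by rw [sub_eq_zero] at h; rw [← h]; ring, by rw [hb]; ring⟩
  · have hbb : 0 < (S 0 1)^2 := by positivity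
    have hprod : (S 0 0 - d₁) * (S 0 0 - d₂) < 0 := by rw [key]; linarith
    have hd : d₁ ≠ d₂ := by
      intro h
      rw [h] at hprod
      nlinarith [sq_nonneg (S 0 0 - d₂)]
    have hdd : d₁ - d₂ ≠ 0 := sub_ne_zero.2 hd
    have ht : 0 < (S 0 0 - d₂) / (d₁ - d₂) := by
      rcases mul_neg_iff.1 hprod with ⟨h1, h2⟩ | ⟨h1, h2⟩
      · exact div_pos_iff.2 (Or.inr ⟨h2, by linarith⟩)
      · exact div_pos_iff.2 (Or.inl ⟨h2, by linarith⟩)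
    set p := Real.sqrt ((S 0 0 - d₂) / (d₁ - d₂)) with hp
    have hp2 : p^2 = (S 0 0 - d₂) / (d₁ - d₂) := Real.sq_sqrt ht.le
    have hppos : 0 < p := Real.sqrt_pos.2 ht
    have hA : p^2 * (d₁ - d₂) = S 0 0 - d₂ := by
      rw [hp2]; field_simp
    set q := S 0 1 / ((d₁ - d₂) * p) with hq
    have e2 : (d₁ - d₂) * (p * q) = S 0 1 := by
      rw [hq]; field_simp
    have hq2 : q^2 = (S 0 1)^2 / ((d₁ - d₂)^2 * p^2) := by
      rw [hq, div_pow]; ring_nf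
    have hpq : p^2 + q^2 = 1 := by
      rw [hq2]
      have hden : (d₁ - d₂)^2 * p^2 ≠ 0 :=
        mul_ne_zero (pow_ne_zero _ hdd) (pow_ne_zero _ hppos.ne')
      field_simp
      linear_combination (p^2*(d₁-d₂) + (S 0 0 - d₂) - (d₁ - d₂)) * hA + key
    refine ⟨p, q, hpq, ?_, e2⟩
    linear_combination d₂ * hpq + hA

lemma quad19 (S : Matrix (Fin 2) (Fin 2) ℝ) (hSsymm : S.IsSymm)
    (d₁ d₂ p q : ℝ) (hpq : p^2 + q^2 = 1) (e1 : d₁*p^2 + d₂*q^2 = S 0 0)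
    (e2 : (d₁ - d₂)*(p*q) = S 0 1) (htr : S.trace = d₁ + d₂) (v : Fin 2 → ℝ) :
    v ⬝ᵥ S.mulVec v = d₁*(p*v 0 + q*v 1)^2 + d₂*(-(q*v 0) + p*v 1)^2 := by
  have hsym : S 0 1 = S 1 0 := hSsymm.apply 1 0
  have htr' : S 0 0 + S 1 1 = d₁ + d₂ := by rw [Matrix.trace_fin_two] at htr; exact htr
  simp only [Matrix.mulVec, dotProduct, Fin.sum_univ_two]
  linear_combination (-(v 0)^2)*e1 - 2*(v 0)*(v 1)*e2 - (v 0)*(v 1)*hsym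
    + (v 1)^2*(htr' + e1 - (d₁+d₂)*hpq)

set_option maxHeartbeats 1000000 in
/-- For an ℝ²-valued process `X` on `[0,1]` with a.s. continuous paths whose two
components are i.i.d. (as processes) and whose law is invariant under every rotation of
the plane, the Laplace functional of the centered quadratic form associated with a
symmetric positive semidefinite matrix `S` with eigenvalues `θ₁², θ₂²` (encoded via the
trace and the determinant) factorizes as `ψ (θ₁ ^ 2) * ψ (θ₂ ^ 2)`. -/
theorem stmt_19 {Ω : Type*} [MeasurableSpace Ω] (P : Measure Ω) [IsProbabilityMeasure P]
    (X : ℝ → Ω → Fin 2 → ℝ)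
    (hmeas : ∀ t : ℝ, Measurable (fun ω => X t ω))
    (hcont : ∀ᵐ ω ∂P, ∀ i : Fin 2, ContinuousOn (fun t => X t ω i) (Set.Icc 0 1))
    (hident : P.map (fun ω => fun t : Set.Icc (0:ℝ) 1 => X t ω 0) =
      P.map (fun ω => fun t : Set.Icc (0:ℝ) 1 => X t ω 1))
    (hindep : IndepFun (fun ω => fun t : Set.Icc (0:ℝ) 1 => X t ω 0)
      (fun ω => fun t : Set.Icc (0:ℝ) 1 => X t ω 1) P)
    (hrot : ∀ R : Matrix (Fin 2) (Fin 2) ℝ, R * Rᵀ = 1 → R.det = 1 →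
      P.map (fun ω => fun t : Set.Icc (0:ℝ) 1 => R.mulVec (X t ω)) =
        P.map (fun ω => fun t : Set.Icc (0:ℝ) 1 => X t ω))
    (ψ : ℝ → ℝ)
    (hψ : ∀ v : ℝ, ψ v = ∫ ω, Real.exp (-(v / 2) *
      ∫ u in (0:ℝ)..1, (X u ω 0 - ∫ s in (0:ℝ)..1, X s ω 0) ^ 2) ∂P)
    (S : Matrix (Fin 2) (Fin 2) ℝ) (hSsymm : S.IsSymm) (hSpsd : S.PosSemidef)
    (θ₁ θ₂ : ℝ)
    (htr : S.trace = θ₁ ^ 2 + θ₂ ^ 2) (hdet : S.det = θ₁ ^ 2 * θ₂ ^ 2) :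
    ∫ ω, Real.exp (-(1 / 2) * ∫ u in (0:ℝ)..1,
        (fun i => X u ω i - ∫ s in (0:ℝ)..1, X s ω i) ⬝ᵥ
          S.mulVec (fun i => X u ω i - ∫ s in (0:ℝ)..1, X s ω i)) ∂P
      = ψ (θ₁ ^ 2) * ψ (θ₂ ^ 2) := by
  obtain ⟨p, q, hpq, e1, e2⟩ := spectral19 S hSsymm (θ₁^2) (θ₂^2) htr hdet
  set d₁ : ℝ := θ₁^2 with hd₁
  set d₂ : ℝ := θ₂^2 with hd₂
  set R : Matrix (Fin 2) (Fin 2) ℝ := !![p, q; -q, p] with hR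
  have hRT : Rᵀ = !![p, -q; q, p] := by
    rw [hR]; ext i j; fin_cases i <;> fin_cases j <;> rfl
  have hRorth : R * Rᵀ = 1 := by
    rw [hR, hRT, Matrix.mul_fin_two, Matrix.one_fin_two]
    ext i j
    fin_cases i <;> fin_cases j <;> simp <;> first | linear_combination hpq | ring
  have hRdet : R.det = 1 := by
    rw [hR, Matrix.det_fin_two_of]
    linear_combination hpq
  have hmv : ∀ v : Fin 2 → ℝ, R.mulVec v 0 = p * v 0 + q * v 1 ∧
      R.mulVec v 1 = -(q * v 0) + p * v 1 := by
    intro v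
    constructor <;> simp [hR, Matrix.mulVec, dotProduct, Fin.sum_univ_two, Matrix.vecHead, Matrix.vecTail]
  -- measurability of path maps
  have hmulVecMeas : Measurable (fun v : Fin 2 → ℝ => R.mulVec v) := by
    apply measurable_pi_lambda
    intro i
    simp only [Matrix.mulVec, dotProduct]
    exact Finset.measurable_sum _ (fun j _ => (measurable_pi_apply j).const_mul _)
  have hpathX : Measurable (fun ω => fun t : Set.Icc (0:ℝ) 1 => X t ω) :=
    measurable_pi_lambda _ (fun t => hmeas t)
  have hpathR : Measurable (fun ω => fun t : Set.Icc (0:ℝ) 1 => R.mulVec (X t ω)) :=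
    measurable_pi_lambda _ (fun t => hmulVecMeas.comp (hmeas t))
  have hpathi : ∀ i : Fin 2, Measurable (fun ω => fun t : Set.Icc (0:ℝ) 1 => X t ω i) :=
    fun i => measurable_pi_lambda _ (fun t => (measurable_pi_apply i).comp (hmeas t))
  -- the functionals
  set g : ℝ → (Set.Icc (0:ℝ) 1 → ℝ) → ℝ := fun d f => Real.exp (-(d/2) * H19 f) with hg
  have hgmeas : ∀ d : ℝ, Measurable (g d) := fun d => (H19_meas.const_mul (-(d/2))).exp
  set G : (Set.Icc (0:ℝ) 1 → Fin 2 → ℝ) → ℝ :=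
    fun h => g d₁ (fun t => h t 0) * g d₂ (fun t => h t 1) with hGdef
  have hcomp : ∀ i : Fin 2, Measurable
      (fun h : Set.Icc (0:ℝ) 1 → Fin 2 → ℝ => fun t => h t i) :=
    fun i => measurable_pi_lambda _ (fun t => (measurable_pi_apply i).comp (measurable_pi_apply t))
  have hGmeas : Measurable G := ((hgmeas d₁).comp (hcomp 0)).mul ((hgmeas d₂).comp (hcomp 1))
  -- helper : interval integrability of continuous functions
  have hii : ∀ (F : ℝ → ℝ), ContinuousOn F (Set.Icc 0 1) →
      IntervalIntegrable F MeasureTheory.volume 0 1 := by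
    intro F hF
    apply ContinuousOn.intervalIntegrable
    rwa [Set.uIcc_of_le (by norm_num : (0:ℝ) ≤ 1)]
  -- Step 1 : LHS = ∫ G (pathR ω)
  have step1 : (∫ ω, Real.exp (-(1 / 2) * ∫ u in (0:ℝ)..1,
        (fun i => X u ω i - ∫ s in (0:ℝ)..1, X s ω i) ⬝ᵥ
          S.mulVec (fun i => X u ω i - ∫ s in (0:ℝ)..1, X s ω i)) ∂P)
      = ∫ ω, G (fun t : Set.Icc (0:ℝ) 1 => R.mulVec (X t ω)) ∂P := by
    apply integral_congr_ae
    filter_upwards [hcont] with ω hω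
    -- continuity of rotated components
    have hZ0c : ContinuousOn (fun u : ℝ => R.mulVec (X u ω) 0) (Set.Icc 0 1) := by
      have : (fun u : ℝ => R.mulVec (X u ω) 0) = fun u => p * X u ω 0 + q * X u ω 1 := by
        funext u; exact (hmv (X u ω)).1
      rw [this]
      exact (continuousOn_const.mul (hω 0)).add (continuousOn_const.mul (hω 1))
    have hZ1c : ContinuousOn (fun u : ℝ => R.mulVec (X u ω) 1) (Set.Icc 0 1) := by
      have : (fun u : ℝ => R.mulVec (X u ω) 1) = fun u => (-q) * X u ω 0 + p * X u ω 1 := by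
        funext u; rw [(hmv (X u ω)).2]; ring
      rw [this]
      exact (continuousOn_const.mul (hω 0)).add (continuousOn_const.mul (hω 1))
    -- mean of rotated components
    have hmean0 : (∫ s in (0:ℝ)..1, R.mulVec (X s ω) 0)
        = p * (∫ s in (0:ℝ)..1, X s ω 0) + q * (∫ s in (0:ℝ)..1, X s ω 1) := by
      have h1 : (fun s : ℝ => R.mulVec (X s ω) 0) = fun s => p * X s ω 0 + q * X s ω 1 := by
        funext s; exact (hmv (X s ω)).1
      rw [h1, intervalIntegral.integral_add ((hii _ (hω 0)).const_mul p)
        ((hii _ (hω 1)).const_mul q), intervalIntegral.integral_const_mul,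
        intervalIntegral.integral_const_mul]
    have hmean1 : (∫ s in (0:ℝ)..1, R.mulVec (X s ω) 1)
        = (-q) * (∫ s in (0:ℝ)..1, X s ω 0) + p * (∫ s in (0:ℝ)..1, X s ω 1) := by
      have h1 : (fun s : ℝ => R.mulVec (X s ω) 1) = fun s => (-q) * X s ω 0 + p * X s ω 1 := by
        funext s; rw [(hmv (X s ω)).2]; ring
      rw [h1, intervalIntegral.integral_add ((hii _ (hω 0)).const_mul (-q))
        ((hii _ (hω 1)).const_mul p), intervalIntegral.integral_const_mul,
        intervalIntegral.integral_const_mul]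
    -- pointwise identity of the quadratic form
    have hptwise : ∀ u : ℝ,
        ((fun i => X u ω i - ∫ s in (0:ℝ)..1, X s ω i) ⬝ᵥ
          S.mulVec (fun i => X u ω i - ∫ s in (0:ℝ)..1, X s ω i))
        = d₁ * (R.mulVec (X u ω) 0 - ∫ s in (0:ℝ)..1, R.mulVec (X s ω) 0)^2
          + d₂ * (R.mulVec (X u ω) 1 - ∫ s in (0:ℝ)..1, R.mulVec (X s ω) 1)^2 := by
      intro u
      rw [quad19 S hSsymm d₁ d₂ p q hpq e1 e2 htr]
      rw [hmean0, hmean1, (hmv (X u ω)).1, (hmv (X u ω)).2]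
      ring
    -- split the integral
    have hsplit : (∫ u in (0:ℝ)..1,
        (fun i => X u ω i - ∫ s in (0:ℝ)..1, X s ω i) ⬝ᵥ
          S.mulVec (fun i => X u ω i - ∫ s in (0:ℝ)..1, X s ω i))
        = d₁ * (∫ u in (0:ℝ)..1,
            (R.mulVec (X u ω) 0 - ∫ s in (0:ℝ)..1, R.mulVec (X s ω) 0)^2)
          + d₂ * (∫ u in (0:ℝ)..1,
            (R.mulVec (X u ω) 1 - ∫ s in (0:ℝ)..1, R.mulVec (X s ω) 1)^2) := by
      simp only [hptwise]
      rw [intervalIntegral.integral_add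
        ((hii (fun u => (R.mulVec (X u ω) 0 - ∫ s in (0:ℝ)..1, R.mulVec (X s ω) 0)^2) (((hZ0c.sub continuousOn_const)).pow 2)).const_mul d₁)
        ((hii (fun u => (R.mulVec (X u ω) 1 - ∫ s in (0:ℝ)..1, R.mulVec (X s ω) 1)^2) (((hZ1c.sub continuousOn_const)).pow 2)).const_mul d₂),
        intervalIntegral.integral_const_mul, intervalIntegral.integral_const_mul]
    rw [hsplit]
    -- identify with H19 and split the exponential
    have hH0 : H19 (fun t : Set.Icc (0:ℝ) 1 => R.mulVec (X t ω) 0)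
        = ∫ u in (0:ℝ)..1, (R.mulVec (X u ω) 0 - ∫ s in (0:ℝ)..1, R.mulVec (X s ω) 0)^2 :=
      H19_eq (F := fun u => R.mulVec (X u ω) 0) hZ0c
    have hH1 : H19 (fun t : Set.Icc (0:ℝ) 1 => R.mulVec (X t ω) 1)
        = ∫ u in (0:ℝ)..1, (R.mulVec (X u ω) 1 - ∫ s in (0:ℝ)..1, R.mulVec (X s ω) 1)^2 :=
      H19_eq (F := fun u => R.mulVec (X u ω) 1) hZ1c
    rw [hGdef]
    simp only [hg]
    rw [← Real.exp_add, hH0, hH1]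
    congr 1
    ring
  rw [step1]
  -- Step 2 : rotation invariance
  have hGsm1 : AEStronglyMeasurable G (P.map (fun ω => fun t : Set.Icc (0:ℝ) 1 =>
      R.mulVec (X t ω))) := hGmeas.aestronglyMeasurable
  have hGsm2 : AEStronglyMeasurable G (P.map (fun ω => fun t : Set.Icc (0:ℝ) 1 => X t ω)) :=
    hGmeas.aestronglyMeasurable
  have step2 : (∫ ω, G (fun t : Set.Icc (0:ℝ) 1 => R.mulVec (X t ω)) ∂P)
      = ∫ ω, G (fun t : Set.Icc (0:ℝ) 1 => X t ω) ∂P := by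
    rw [← integral_map hpathR.aemeasurable hGsm1, hrot R hRorth hRdet,
      integral_map hpathX.aemeasurable hGsm2]
  rw [step2]
  -- Step 3 : independence
  have step3 : (∫ ω, G (fun t : Set.Icc (0:ℝ) 1 => X t ω) ∂P)
      = (∫ ω, g d₁ (fun t : Set.Icc (0:ℝ) 1 => X t ω 0) ∂P)
        * ∫ ω, g d₂ (fun t : Set.Icc (0:ℝ) 1 => X t ω 1) ∂P := by
    have hIF : IndepFun ((g d₁) ∘ (fun ω => fun t : Set.Icc (0:ℝ) 1 => X t ω 0))
        ((g d₂) ∘ (fun ω => fun t : Set.Icc (0:ℝ) 1 => X t ω 1)) P :=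
      hindep.comp (hgmeas d₁) (hgmeas d₂)
    have := hIF.integral_mul_eq_mul_integral
      ((hgmeas d₁).comp (hpathi 0)).aestronglyMeasurable
      ((hgmeas d₂).comp (hpathi 1)).aestronglyMeasurable
    exact this
  rw [step3]
  -- Step 4 : identical distribution for the second factor
  have step4 : (∫ ω, g d₂ (fun t : Set.Icc (0:ℝ) 1 => X t ω 1) ∂P)
      = ∫ ω, g d₂ (fun t : Set.Icc (0:ℝ) 1 => X t ω 0) ∂P := by
    rw [← integral_map (hpathi 1).aemeasurable
        ((hgmeas d₂).aestronglyMeasurable : AEStronglyMeasurable (g d₂)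
          (P.map (fun ω => fun t : Set.Icc (0:ℝ) 1 => X t ω 1))),
      ← hident,
      integral_map (hpathi 0).aemeasurable (hgmeas d₂).aestronglyMeasurable]
  rw [step4]
  -- Step 5 : identification with ψ
  have step5 : ∀ d : ℝ, (∫ ω, g d (fun t : Set.Icc (0:ℝ) 1 => X t ω 0) ∂P) = ψ d := by
    intro d
    rw [hψ d]
    apply integral_congr_ae
    filter_upwards [hcont] with ω hω
    simp only [hg]
    rw [H19_eq (F := fun u => X u ω 0) (hω 0)]
  rw [step5 d₁, step5 d₂]
end
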